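/- Let λ = √(1/2) and let ε > 0. Suppose p : ℕ → (0,1) satisfies n·p(n) → ∞ and p(n) < (λ − ε)·√(log n / n) for all sufficiently large n. For Γ ∈ G(n, p(n)), let X_n denote the number of sets S of 5 vertices such that S induces a 5-cycle in Γ and no vertex of Γ outside S is adjacent to two non-adjacent vertices of S. Then E[X_n] → ∞ as n → ∞. -/

import Mathlib

open MeasureTheory Filter

/-- Bernoulli measure on `Bool` with success probability `p`. -/
noncomputable def bernoulliBool (p : ℝ) : Measure Bool :=
  ENNReal.ofReal p • Measure.dirac true + ENNReal.ofReal (1 - p) • Measure.dirac false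

/-- The Erdős–Rényi measure: each potential edge of a graph on `Fin n`
is present independently with probability `p`. -/
noncomputable def edgeMeasure (n : ℕ) (p : ℝ) : Measure (Sym2 (Fin n) → Bool) :=
  Measure.pi fun _ => bernoulliBool p

/-- The simple graph determined by an indicator of edges. -/
def graphOf {n : ℕ} (ω : Sym2 (Fin n) → Bool) : SimpleGraph (Fin n) :=
  SimpleGraph.fromEdgeSet {e | ω e = true}

/-- `S` is an induced `k`-cycle in `G`: `S` has `k` vertices and the induced
subgraph on `S` is a cycle of length `k`. -/
def IsInducedCycle {V : Type*} (G : SimpleGraph V) (k : ℕ) (S : Finset V) : Prop :=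
  S.card = k ∧ Nonempty (G.induce (S : Set V) ≃g SimpleGraph.cycleGraph k)

/-- The (full) subgraph of `G` induced on the vertex set `Λ` is Morse: whenever `C` is an
induced 4-cycle of `G` such that `C ∩ Λ` contains two non-adjacent vertices, `C ⊆ Λ`. -/
def IsMorse {V : Type*} (G : SimpleGraph V) (Λ : Set V) : Prop :=
  ∀ C : Finset V, IsInducedCycle G 4 C →
    (∃ v ∈ C, ∃ w ∈ C, v ∈ Λ ∧ w ∈ Λ ∧ v ≠ w ∧ ¬ G.Adj v w) → ↑C ⊆ Λ

/-- No vertex of G outside S is adjacent to two non-adjacent vertices of S. -/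
def NoOutsideCommonNbr {V : Type*} (G : SimpleGraph V) (S : Finset V) : Prop :=
  ∀ x ∉ S, ¬ ∃ v ∈ S, ∃ w ∈ S, v ≠ w ∧ ¬ G.Adj v w ∧ G.Adj x v ∧ G.Adj x w

/-!
Order a 5-set `S` increasingly and ask that the ten pairs inside `S` form the pentagon
`0-1-2-3-4-0`, and that every vertex outside `S` is joined to a clique of that pentagon
(nothing, one vertex, or two consecutive vertices). Such an `S` is counted by `X_n`, and these
requirements concern disjoint sets of pairs, so
`E[X_n] ≥ C(n,5) p⁵ (1-p)⁵ q^(n-5)`, where `q = (1-p)⁵ + 5p(1-p)⁴ + 5p²(1-p)³ ≥ 1 - 5p²`.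

The hypothesis gives `np² ≤ c log n` with `c = (√(1/2) - ε)² < 1/2`; fix `a > 1` with `ac < 1/2`.
Since `p → 0`, `E[X_n]` is at least a constant times `(np · exp(-a·np²))⁵`. When `np² ≤ 1` this
is of order `(np)⁵ → ∞`; otherwise `(np)² = n · np² ≥ n` and it is at least `n^(5(1/2 - ac))`.
-/
open Finset SimpleGraph

theorem MeasureTheory.Measure.pi_setOf_forall_apply_eq {ι J α : Type*} [Fintype ι] [Fintype J]
    [MeasurableSpace α] (ν : Measure α) [IsProbabilityMeasure ν] {g : J → ι}
    (hg : g.Injective) (b : J → α) :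
    Measure.pi (fun _ : ι => ν) {ω | ∀ j, ω (g j) = b j} = ∏ j, ν {b j} := by
  have hbox : {ω : ι → α | ∀ j, ω (g j) = b j} =
      Set.univ.pi fun i => {a | ∀ j, g j = i → a = b j} := by
    ext ω
    simp only [Set.mem_ofPred_eq, Set.mem_univ_pi]
    exact ⟨fun h i j hj => hj ▸ h j, fun h j => h _ j rfl⟩
  rw [hbox, Measure.pi_pi]
  refine (Fintype.prod_of_injective g hg _ _ ?_ ?_).symm
  · intro i hi
    have : {a | ∀ j, g j = i → a = b j} = Set.univ := by
      ext a; simpa using fun j hj => (hi ⟨j, hj⟩).elim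
    rw [this, measure_univ]
  · intro j
    congr 1
    ext a
    simp only [Set.mem_ofPred_eq, Set.mem_singleton_iff]
    exact ⟨fun h j' hj' => hg hj' ▸ h, fun h => h j rfl⟩

theorem MeasureTheory.measureReal_pi_setOf_forall_apply_eq {ι J α : Type*} [Fintype ι]
    [Fintype J] [MeasurableSpace α] (ν : Measure α) [IsProbabilityMeasure ν] {g : J → ι}
    (hg : g.Injective) (b : J → α) :
    (Measure.pi fun _ : ι => ν).real {ω | ∀ j, ω (g j) = b j} = ∏ j, ν.real {b j} := by
  simp only [measureReal_def, Measure.pi_setOf_forall_apply_eq ν hg b, ENNReal.toReal_prod]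

section Bernoulli

variable {p : ℝ}

lemma isProbabilityMeasure_bernoulliBool (hp0 : 0 ≤ p) (hp1 : p ≤ 1) :
    IsProbabilityMeasure (bernoulliBool p) :=
  ⟨by simp [bernoulliBool, ← ENNReal.ofReal_add hp0 (sub_nonneg.2 hp1)]⟩

lemma isProbabilityMeasure_edgeMeasure (n : ℕ) (hp0 : 0 ≤ p) (hp1 : p ≤ 1) :
    IsProbabilityMeasure (edgeMeasure n p) :=
  have := isProbabilityMeasure_bernoulliBool hp0 hp1
  inferInstanceAs (IsProbabilityMeasure (Measure.pi _))

lemma bernoulliBool_real_singleton (hp0 : 0 ≤ p) (hp1 : p ≤ 1) (b : Bool) :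
    (bernoulliBool p).real {b} = if b then p else 1 - p := by
  cases b <;> simp [bernoulliBool, measureReal_def, hp0, hp1]

end Bernoulli

lemma integral_natCard_eq_sum_measureReal {Ω ι : Type*} [MeasurableSpace Ω]
    [DiscreteMeasurableSpace Ω] [Finite Ω] [Fintype ι] (μ : Measure Ω) [IsFiniteMeasure μ]
    (P : Ω → ι → Prop) :
    ∫ ω, (Nat.card {i // P ω i} : ℝ) ∂μ = ∑ i, μ.real {ω | P ω i} := by
  classical
  have hcard : ∀ ω, (Nat.card {i // P ω i} : ℝ) = ∑ i, {ω | P ω i}.indicator 1 ω := by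
    intro ω
    simp [Nat.card_eq_fintype_card, Fintype.card_subtype, Set.indicator_apply]
  simp_rw [hcard]
  rw [integral_finsetSum _ fun _ _ => Integrable.of_finite]
  simp [integral_indicator_one MeasurableSet.of_discrete]

section Graph

variable {V : Type*} {G : SimpleGraph V} {k : ℕ}

lemma isInducedCycle_map_univ (φ : cycleGraph k ↪g G) :
    IsInducedCycle G k (univ.map φ.toEmbedding) := by
  refine ⟨by simp, ⟨?_⟩⟩
  rw [coe_map, coe_univ, Set.image_univ]
  exact φ.isoInduceRange.symm

lemma noOutsideCommonNbr_map_univ {H : SimpleGraph (Fin k)} (φ : H ↪g G)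
    (hclique : ∀ x ∉ univ.map φ.toEmbedding, H.IsClique {i | G.Adj x (φ i)}) :
    NoOutsideCommonNbr G (univ.map φ.toEmbedding) := by
  rintro x hx ⟨_, hv, _, hw, hvw, hnadj, hxv, hxw⟩
  obtain ⟨i, -, rfl⟩ := mem_map.1 hv
  obtain ⟨j, -, rfl⟩ := mem_map.1 hw
  exact hnadj (φ.map_adj_iff.2 (hclique x hx hxv hxw fun hij => hvw (congrArg φ hij)))

end Graph

lemma graphOf_adj {n : ℕ} {ω : Sym2 (Fin n) → Bool} {u v : Fin n} :
    (graphOf ω).Adj u v ↔ u ≠ v ∧ ω s(u, v) = true := by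
  simp [graphOf, and_comm]

section Pattern

variable {V : Type*} {k : ℕ} (f : Fin k ↪ V)

abbrev PatternIndex : Type _ :=
  {e : Sym2 (Fin k) // ¬e.IsDiag} ⊕ ({x // x ∉ univ.map f} × Fin k)

def patternEdge : PatternIndex f → Sym2 V :=
  Sum.elim (fun e => e.1.map f) fun xi => s(xi.1.1, f xi.2)

lemma patternEdge_injective : (patternEdge f).Injective := by
  have hout : ∀ (e : Sym2 (Fin k)) (x : {x // x ∉ univ.map f}) (i : Fin k),
      e.map f ≠ s(x.1, f i) := by
    intro e x i he
    obtain ⟨a, -, ha⟩ := Sym2.mem_map.1 (he ▸ Sym2.mem_mk_left x.1 (f i))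
    exact x.2 (ha ▸ mem_map_of_mem f (mem_univ a))
  rintro (e | ⟨x, i⟩) (e' | ⟨x', i'⟩) h <;>
    simp only [patternEdge, Sum.elim_inl, Sum.elim_inr] at h
  · exact congrArg Sum.inl (Subtype.ext (Sym2.map.injective f.injective h))
  · exact (hout _ _ _ h).elim
  · exact (hout _ _ _ h.symm).elim
  · rcases Sym2.eq_iff.1 h with ⟨hx, hi⟩ | ⟨hx, -⟩
    · rw [Subtype.ext hx, f.injective hi]
    · exact (x.2 (hx ▸ mem_map_of_mem f (mem_univ i'))).elim

variable (H : SimpleGraph (Fin k)) [DecidableRel H.Adj]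

def patternValue (F : {x // x ∉ univ.map f} → Finset (Fin k)) : PatternIndex f → Bool :=
  Sum.elim (fun e => decide (e.1 ∈ H.edgeSet)) fun xi => decide (xi.2 ∈ F xi.1)

/-- `ω` makes `f` an induced copy of `H` in which each vertex `x` outside the image of `f` has
neighbourhood `F x`. -/
def patternEvent (F : {x // x ∉ univ.map f} → Finset (Fin k)) : Set (Sym2 V → Bool) :=
  {ω | ∀ j, ω (patternEdge f j) = patternValue f H F j}

variable {f H}

lemma disjoint_patternEvent {F F' : {x // x ∉ univ.map f} → Finset (Fin k)} (hF : F ≠ F') :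
    Disjoint (patternEvent f H F) (patternEvent f H F') := by
  refine Set.disjoint_left.2 fun ω hω hω' => hF (funext fun x => Finset.ext fun i => ?_)
  simpa [patternEdge, patternValue] using (hω (.inr (x, i))).symm.trans (hω' (.inr (x, i)))

end Pattern

section PatternGraph

variable {n k : ℕ} {f : Fin k ↪ Fin n} {H : SimpleGraph (Fin k)} [DecidableRel H.Adj]
  {F : {x // x ∉ univ.map f} → Finset (Fin k)} {ω : Sym2 (Fin n) → Bool}

lemma graphOf_adj_of_mem_patternEvent (hω : ω ∈ patternEvent f H F) (i j : Fin k) :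
    (graphOf ω).Adj (f i) (f j) ↔ H.Adj i j := by
  rcases eq_or_ne i j with rfl | hij
  · simp
  · have := hω (.inl ⟨s(i, j), by simpa using hij⟩)
    simp only [patternEdge, patternValue, Sum.elim_inl, Sym2.map_mk, mem_edgeSet] at this
    simp [graphOf_adj, hij, this]

lemma graphOf_adj_of_mem_patternEvent_of_notMem (hω : ω ∈ patternEvent f H F)
    (x : {x // x ∉ univ.map f}) (i : Fin k) :
    (graphOf ω).Adj x (f i) ↔ i ∈ F x := by
  have hx : x.1 ≠ f i := fun h => x.2 (h ▸ mem_map_of_mem f (mem_univ i))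
  have := hω (.inr (x, i))
  simp only [patternEdge, patternValue, Sum.elim_inr] at this
  simp [graphOf_adj, hx, this]

end PatternGraph

def cliqueSets {α : Type*} [Fintype α] [DecidableEq α] (G : SimpleGraph α)
    [DecidableRel G.Adj] : Finset (Finset α) :=
  {T | G.IsClique (T : Set α)}

def extensionEvent {V : Type*} [Fintype V] [DecidableEq V] {k : ℕ} (f : Fin k ↪ V)
    (H : SimpleGraph (Fin k)) [DecidableRel H.Adj] : Set (Sym2 V → Bool) :=
  ⋃ F ∈ Fintype.piFinset fun _ : {x // x ∉ univ.map f} => cliqueSets H, patternEvent f H F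

lemma extensionEvent_cycleGraph_subset {n k : ℕ} (f : Fin k ↪ Fin n) :
    extensionEvent f (cycleGraph k) ⊆ {ω | IsInducedCycle (graphOf ω) k (univ.map f) ∧
      NoOutsideCommonNbr (graphOf ω) (univ.map f)} := by
  intro ω hω
  simp only [extensionEvent, Set.mem_iUnion] at hω
  obtain ⟨F, hF, hωF⟩ := hω
  let φ : cycleGraph k ↪g graphOf ω := ⟨f, graphOf_adj_of_mem_patternEvent hωF _ _⟩
  refine ⟨isInducedCycle_map_univ φ, noOutsideCommonNbr_map_univ φ fun x hx => ?_⟩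
  have hnbr : {i | (graphOf ω).Adj x (f i)} = F ⟨x, hx⟩ := by
    ext i
    exact graphOf_adj_of_mem_patternEvent_of_notMem hωF ⟨x, hx⟩ i
  change (cycleGraph k).IsClique {i | (graphOf ω).Adj x (f i)}
  rw [hnbr]
  exact (mem_filter.1 (Fintype.mem_piFinset.1 hF _)).2

lemma Fintype.prod_ite_mem_eq_pow_mul_pow {ι M : Type*} [Fintype ι] [DecidableEq ι]
    [CommMonoid M] (T : Finset ι) (a b : M) :
    ∏ i, (if i ∈ T then a else b) = a ^ #T * b ^ (Fintype.card ι - #T) := by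
  rw [prod_ite, prod_const, prod_const, filter_mem_eq_inter, univ_inter, ← card_compl]
  congr 3
  ext; simp

section Measure

variable {n k : ℕ} {p : ℝ} (hp0 : 0 ≤ p) (hp1 : p ≤ 1) (f : Fin k ↪ Fin n)
  (H : SimpleGraph (Fin k)) [DecidableRel H.Adj]
include hp0 hp1

lemma edgeMeasure_real_patternEvent (F : {x // x ∉ univ.map f} → Finset (Fin k)) :
    (edgeMeasure n p).real (patternEvent f H F) =
      (∏ e : {e : Sym2 (Fin k) // ¬e.IsDiag}, if e.1 ∈ H.edgeSet then p else 1 - p) *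
        ∏ x, p ^ #(F x) * (1 - p) ^ (k - #(F x)) := by
  have := isProbabilityMeasure_bernoulliBool hp0 hp1
  rw [edgeMeasure, patternEvent, measureReal_pi_setOf_forall_apply_eq _ (patternEdge_injective f),
    Fintype.prod_sum_type, Fintype.prod_prod_type]
  simp only [patternValue, Sum.elim_inl, Sum.elim_inr, bernoulliBool_real_singleton hp0 hp1,
    decide_eq_true_eq]
  simp_rw [Fintype.prod_ite_mem_eq_pow_mul_pow, Fintype.card_fin]

lemma edgeMeasure_real_extensionEvent :
    (edgeMeasure n p).real (extensionEvent f H) =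
      (∏ e : {e : Sym2 (Fin k) // ¬e.IsDiag}, if e.1 ∈ H.edgeSet then p else 1 - p) *
        (∑ T ∈ cliqueSets H, p ^ #T * (1 - p) ^ (k - #T)) ^ (n - k) := by
  have := isProbabilityMeasure_edgeMeasure n hp0 hp1
  rw [extensionEvent, measureReal_biUnion_finset
    (fun F _ F' _ hF => disjoint_patternEvent hF) fun _ _ => MeasurableSet.of_discrete]
  simp_rw [edgeMeasure_real_patternEvent hp0 hp1, ← mul_sum]
  rw [← prod_univ_sum (fun _ => cliqueSets H) fun _ T => p ^ #T * (1 - p) ^ (k - #T), prod_const,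
    card_univ, Fintype.card_subtype_compl, Fintype.card_coe, card_map, card_univ,
    Fintype.card_fin, Fintype.card_fin]

end Measure

lemma prod_nonDiag_ite_mem_edgeSet_cycleGraph_five {M : Type*} [CommMonoid M] (a b : M) :
    ∏ e : {e : Sym2 (Fin 5) // ¬e.IsDiag}, (if e.1 ∈ (cycleGraph 5).edgeSet then a else b) =
      a ^ 5 * b ^ 5 := by
  rw [prod_ite, prod_const, prod_const]
  congr 2

lemma sum_cliqueSets_cycleGraph_five {R : Type*} [CommSemiring R] (a b : R) :
    ∑ T ∈ cliqueSets (cycleGraph 5), a ^ #T * b ^ (5 - #T) =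
      b ^ 5 + 5 * (a * b ^ 4) + 5 * (a ^ 2 * b ^ 3) := by
  rw [sum_comp (fun m => a ^ m * b ^ (5 - m)) card]
  have himage : (cliqueSets (cycleGraph 5)).image card = {0, 1, 2} := by decide
  have h0 : #{T ∈ cliqueSets (cycleGraph 5) | #T = 0} = 1 := by decide
  have h1 : #{T ∈ cliqueSets (cycleGraph 5) | #T = 1} = 5 := by decide
  have h2 : #{T ∈ cliqueSets (cycleGraph 5) | #T = 2} = 5 := by decide
  rw [himage, sum_insert (by decide), sum_insert (by decide), sum_singleton, h0, h1, h2]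
  simp only [one_smul, nsmul_eq_mul, Nat.cast_ofNat, Nat.sub_zero, pow_zero, pow_one, one_mul]
  ring

def cliqueNbhdProb (p : ℝ) : ℝ :=
  (1 - p) ^ 5 + 5 * (p * (1 - p) ^ 4) + 5 * (p ^ 2 * (1 - p) ^ 3)

section Expectation

variable {n : ℕ} {p : ℝ} (hp0 : 0 ≤ p) (hp1 : p ≤ 1)
include hp0 hp1

lemma le_edgeMeasure_real_isInducedCycle_five {S : Finset (Fin n)} (hS : #S = 5) :
    p ^ 5 * (1 - p) ^ 5 * cliqueNbhdProb p ^ (n - 5) ≤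
      (edgeMeasure n p).real
        {ω | IsInducedCycle (graphOf ω) 5 S ∧ NoOutsideCommonNbr (graphOf ω) S} := by
  have := isProbabilityMeasure_edgeMeasure n hp0 hp1
  set f := (S.orderEmbOfFin hS).toEmbedding
  have hsub := extensionEvent_cycleGraph_subset f
  rw [map_orderEmbOfFin_univ] at hsub
  calc p ^ 5 * (1 - p) ^ 5 * cliqueNbhdProb p ^ (n - 5)
      = (edgeMeasure n p).real (extensionEvent f (cycleGraph 5)) := by
        rw [edgeMeasure_real_extensionEvent hp0 hp1, prod_nonDiag_ite_mem_edgeSet_cycleGraph_five,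
          sum_cliqueSets_cycleGraph_five, cliqueNbhdProb]
    _ ≤ _ := measureReal_mono hsub

lemma choose_five_mul_le_integral :
    (n.choose 5 : ℝ) * (p ^ 5 * (1 - p) ^ 5 * cliqueNbhdProb p ^ (n - 5)) ≤
      ∫ ω, (Nat.card {S : Finset (Fin n) //
          IsInducedCycle (graphOf ω) 5 S ∧ NoOutsideCommonNbr (graphOf ω) S} : ℝ)
        ∂(edgeMeasure n p) := by
  have := isProbabilityMeasure_edgeMeasure n hp0 hp1
  rw [integral_natCard_eq_sum_measureReal]
  calc (n.choose 5 : ℝ) * (p ^ 5 * (1 - p) ^ 5 * cliqueNbhdProb p ^ (n - 5))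
      = ∑ _S ∈ powersetCard 5 (univ : Finset (Fin n)),
          p ^ 5 * (1 - p) ^ 5 * cliqueNbhdProb p ^ (n - 5) := by
        simp
    _ ≤ ∑ S ∈ powersetCard 5 univ, (edgeMeasure n p).real
          {ω | IsInducedCycle (graphOf ω) 5 S ∧ NoOutsideCommonNbr (graphOf ω) S} :=
        sum_le_sum fun S hS =>
          le_edgeMeasure_real_isInducedCycle_five hp0 hp1 (mem_powersetCard_univ.1 hS)
    _ ≤ _ := sum_le_univ_sum_of_nonneg fun _ => measureReal_nonneg

end Expectation

open Real

lemma one_sub_five_mul_sq_le_cliqueNbhdProb {p : ℝ} (hp0 : 0 ≤ p) (hp1 : p ≤ 1) :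
    1 - 5 * p ^ 2 ≤ cliqueNbhdProb p := by
  have hdiff : cliqueNbhdProb p - (1 - 5 * p ^ 2) = p ^ 3 * (5 - p ^ 2) := by
    unfold cliqueNbhdProb; ring
  nlinarith [mul_nonneg (pow_nonneg hp0 3) (by nlinarith : (0 : ℝ) ≤ 5 - p ^ 2)]

lemma Real.exp_neg_mul_le_one_sub {a x : ℝ} (ha : 0 ≤ a) (hx : 0 ≤ x)
    (hax : a * x ≤ a - 1) : exp (-(a * x)) ≤ 1 - x := by
  have hinv : exp (-(a * x)) * exp (a * x) = 1 := by rw [← exp_add]; simp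
  nlinarith [add_one_le_exp (a * x), exp_pos (-(a * x)), mul_nonneg ha hx]

lemma exp_neg_pow_le_cliqueNbhdProb_pow {a x : ℝ} (ha : 0 ≤ a) (hx0 : 0 ≤ x) (hx1 : x ≤ 1)
    (hax : a * (5 * x ^ 2) ≤ a - 1) {m n : ℕ} (hmn : m ≤ n) :
    exp (-(a * (5 * x ^ 2))) ^ n ≤ cliqueNbhdProb x ^ m := by
  have hexp := exp_neg_mul_le_one_sub ha (by positivity) hax
  calc exp (-(a * (5 * x ^ 2))) ^ n ≤ exp (-(a * (5 * x ^ 2))) ^ m :=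
        pow_le_pow_of_le_one (exp_pos _).le (exp_le_one_iff.2 (by simp; positivity)) hmn
    _ ≤ (1 - 5 * x ^ 2) ^ m := pow_le_pow_left₀ (exp_pos _).le hexp m
    _ ≤ cliqueNbhdProb x ^ m :=
        pow_le_pow_left₀ ((exp_pos _).le.trans hexp)
          (one_sub_five_mul_sq_le_cliqueNbhdProb hx0 hx1) m

lemma Nat.div_two_pow_div_factorial_le_choose {r n : ℕ} (h : 2 * r ≤ n + 2) :
    ((n : ℝ) / 2) ^ r / r.factorial ≤ n.choose r := by
  refine le_trans ?_ (Nat.pow_le_choose r n)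
  have hr : ((2 * r : ℕ) : ℝ) ≤ ((n + 2 : ℕ) : ℝ) := by exact_mod_cast h
  push_cast at hr
  gcongr
  rw [Nat.cast_sub (by omega)]
  push_cast
  linarith

lemma tendsto_mul_mul_exp_neg_atTop {p : ℕ → ℝ} {a b : ℝ} (hp : ∀ n, 0 < p n)
    (hnp : Tendsto (fun n : ℕ => n * p n) atTop atTop) (ha : 0 ≤ a) (hb : b < 1 / 2)
    (h : ∀ᶠ n : ℕ in atTop, a * (n * p n ^ 2) ≤ b * log n) :
    Tendsto (fun n : ℕ => n * p n * exp (-(a * (n * p n ^ 2)))) atTop atTop := by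
  have hlog : Tendsto (fun n : ℕ => log (n * p n) - a) atTop atTop :=
    tendsto_atTop_add_const_right _ _ (tendsto_log_atTop.comp hnp)
  have hlogn : Tendsto (fun n : ℕ => (1 / 2 - b) * log n) atTop atTop :=
    (tendsto_log_atTop.comp tendsto_natCast_atTop_atTop).const_mul_atTop (by linarith)
  have hexponent : Tendsto (fun n : ℕ => log (n * p n) + -(a * (n * p n ^ 2))) atTop atTop := by
    refine tendsto_atTop.2 fun B => ?_
    filter_upwards [h, hlog.eventually_ge_atTop B, hlogn.eventually_ge_atTop B,
      eventually_gt_atTop 0] with n hn h1 h2 hn0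
    have hn0' : (0 : ℝ) < n := by exact_mod_cast hn0
    rcases le_total (n * p n ^ 2) 1 with ht | ht
    · nlinarith
    · -- `(n p)² = n · (n p²) ≥ n`, so `log (n p) ≥ log n / 2`
      have hsq : log n ≤ 2 * log (n * p n) := by
        rw [← log_rpow (by have := hp n; positivity)]
        refine log_le_log hn0' ?_
        rw [show (n * p n) ^ (2 : ℝ) = n * (n * p n ^ 2) by norm_cast; ring]
        nlinarith
      linarith
  refine (tendsto_exp_atTop.comp hexponent).congr' ?_
  filter_upwards [eventually_gt_atTop 0] with n hn0
  have : (0 : ℝ) < n * p n := mul_pos (by exact_mod_cast hn0) (hp n)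
  simp [exp_add, exp_log this]

lemma tendsto_nhds_zero_of_mul_sq_le_log {p : ℕ → ℝ} {c : ℝ} (hp : ∀ n, 0 ≤ p n)
    (hpc : ∀ᶠ n : ℕ in atTop, n * p n ^ 2 ≤ c * log n) : Tendsto p atTop (nhds 0) := by
  have hlog : Tendsto (fun n : ℕ => c * (log n / n)) atTop (nhds 0) := by
    simpa using ((isLittleO_log_id_atTop.tendsto_div_nhds_zero).comp
      tendsto_natCast_atTop_atTop).const_mul c
  have hsq : Tendsto (fun n => p n ^ 2) atTop (nhds 0) := by
    refine squeeze_zero' (.of_forall fun n => by positivity) ?_ hlog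
    filter_upwards [hpc, eventually_gt_atTop 0] with n h hn
    rw [mul_div_assoc', le_div_iff₀ (by exact_mod_cast hn)]
    linarith
  simpa [Function.comp_def, sqrt_sq (hp _)] using (continuous_sqrt.tendsto 0).comp hsq

lemma mul_mul_exp_neg_pow_le_choose_five_mul {a x : ℝ} (ha : 0 ≤ a) (hx0 : 0 ≤ x)
    (hx : x ≤ 1 / 2) (hax : a * (5 * x ^ 2) ≤ a - 1) {n : ℕ} (hn : 8 ≤ n) :
    1 / 122880 * (n * x * exp (-(a * (n * x ^ 2)))) ^ 5 ≤
      n.choose 5 * (x ^ 5 * (1 - x) ^ 5 * cliqueNbhdProb x ^ (n - 5)) := by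
  have hexp : exp (-(a * (n * x ^ 2))) ^ 5 = exp (-(a * (5 * x ^ 2))) ^ n := by
    rw [← exp_nat_mul, ← exp_nat_mul]
    ring_nf
  -- `122880 = 2⁵ · 5! · 2⁵`
  calc 1 / 122880 * (n * x * exp (-(a * (n * x ^ 2)))) ^ 5
      = ((n : ℝ) / 2) ^ 5 / (5 : ℕ).factorial *
          (x ^ 5 * (1 / 2) ^ 5 * exp (-(a * (5 * x ^ 2))) ^ n) := by
        rw [mul_pow, hexp, Nat.factorial]
        norm_num
        ring
    _ ≤ n.choose 5 * (x ^ 5 * (1 - x) ^ 5 * cliqueNbhdProb x ^ (n - 5)) := by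
        gcongr
        · exact Nat.div_two_pow_div_factorial_le_choose (by omega)
        · exact mul_nonneg (pow_nonneg hx0 5) (pow_nonneg (by linarith) 5)
        · linarith
        · exact exp_neg_pow_le_cliqueNbhdProb_pow ha hx0 (by linarith) hax (Nat.sub_le n 5)

lemma tendsto_choose_five_mul_atTop {p : ℕ → ℝ} {c : ℝ} (hp : ∀ n, 0 < p n)
    (hnp : Tendsto (fun n : ℕ => n * p n) atTop atTop) (hc : c < 1 / 2)
    (hpc : ∀ᶠ n : ℕ in atTop, n * p n ^ 2 ≤ c * log n) :
    Tendsto (fun n : ℕ => (n.choose 5 : ℝ) *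
      (p n ^ 5 * (1 - p n) ^ 5 * cliqueNbhdProb (p n) ^ (n - 5))) atTop atTop := by
  obtain ⟨a, ha1, hac⟩ : ∃ a : ℝ, 1 < a ∧ a * c < 1 / 2 :=
    ⟨3 / 2 - c, by linarith, by nlinarith⟩
  have hac_log : ∀ᶠ n : ℕ in atTop, a * (n * p n ^ 2) ≤ a * c * log n :=
    hpc.mono fun n h => by rw [mul_assoc]; exact mul_le_mul_of_nonneg_left h (by linarith)
  have hlim : Tendsto (fun n : ℕ => 1 / 122880 * (n * p n * exp (-(a * (n * p n ^ 2)))) ^ 5)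
      atTop atTop :=
    ((tendsto_pow_atTop (by norm_num)).comp (tendsto_mul_mul_exp_neg_atTop hp hnp
      (by linarith) hac hac_log)).const_mul_atTop (by norm_num)
  have hp0 := tendsto_nhds_zero_of_mul_sq_le_log (fun n => (hp n).le) hpc
  have hsq : Tendsto (fun n => a * (5 * p n ^ 2)) atTop (nhds 0) := by
    simpa using ((hp0.pow 2).const_mul 5).const_mul a
  refine tendsto_atTop_mono' _ ?_ hlim
  filter_upwards [eventually_ge_atTop 8, hp0.eventually_le_const (by norm_num : (0 : ℝ) < 1 / 2),
    hsq.eventually_le_const (by linarith : (0 : ℝ) < a - 1)] with n hn hhalf hsmall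
  exact mul_mul_exp_neg_pow_le_choose_five_mul (by linarith) (hp n).le hhalf hsmall hn

lemma exists_lt_half_mul_sq_le_log {ε : ℝ} (hε : 0 < ε) {p : ℕ → ℝ} (hp : ∀ n, 0 < p n)
    (hlt : ∀ᶠ n : ℕ in atTop, p n < (√(1 / 2) - ε) * √(log n / n)) :
    ∃ c < 1 / 2, ∀ᶠ n : ℕ in atTop, n * p n ^ 2 ≤ c * log n := by
  set l := √(1 / 2) - ε
  have hl : 0 < l := by
    obtain ⟨n, hn⟩ := hlt.exists
    exact pos_of_mul_pos_left ((hp n).trans hn) (sqrt_nonneg _)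
  refine ⟨l ^ 2, ?_, ?_⟩
  · calc l ^ 2 < √(1 / 2) ^ 2 := by gcongr; linarith
      _ = 1 / 2 := sq_sqrt (by norm_num)
  · filter_upwards [hlt, eventually_gt_atTop 0] with n hn hn0
    have hn0' : (0 : ℝ) < n := by exact_mod_cast hn0
    have hsq : p n ^ 2 ≤ l ^ 2 * (log n / n) := by
      calc p n ^ 2 ≤ (l * √(log n / n)) ^ 2 := by gcongr; exact (hp n).le
        _ = l ^ 2 * (log n / n) := by
          rw [mul_pow, sq_sqrt (div_nonneg (log_natCast_nonneg n) hn0'.le)]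
    rw [mul_div_assoc', le_div_iff₀ hn0'] at hsq
    linarith

/-- At densities below $(\sqrt{1/2}-\epsilon)\sqrt{\log n / n}$ (with $np \to \infty$),
the expected number of induced 5-cycles S with no outside vertex adjacent to two
non-adjacent vertices of S tends to infinity. -/
theorem expected_morse_pentagons_tendsto_atTop (ε : ℝ) (hε : 0 < ε) (p : ℕ → ℝ)
    (hp : ∀ n, 0 < p n ∧ p n < 1)
    (hnp : Tendsto (fun n : ℕ => (n : ℝ) * p n) atTop atTop)
    (hlt : ∀ᶠ n : ℕ in atTop,
      p n < (Real.sqrt (1 / 2) - ε) * Real.sqrt (Real.log n / n)) :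
    Tendsto
      (fun n : ℕ =>
        ∫ ω, (Nat.card {S : Finset (Fin n) //
            IsInducedCycle (graphOf ω) 5 S ∧ NoOutsideCommonNbr (graphOf ω) S} : ℝ)
          ∂(edgeMeasure n (p n)))
      atTop atTop := by
  obtain ⟨c, hc, hpc⟩ := exists_lt_half_mul_sq_le_log hε (fun n => (hp n).1) hlt
  exact tendsto_atTop_mono (fun n => choose_five_mul_le_integral (hp n).1.le (hp n).2.le)
    (tendsto_choose_five_mul_atTop (fun n => (hp n).1) hnp hc hpc)
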